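/- Let H be a Hilbert space, A : dom(A) ⊆ H → H a self-adjoint operator, and B a symmetric operator with dom(B) ⊇ dom(A) such that there exist constants 0 ≤ a < 1 and b ≥ 0 with ‖Bx‖ ≤ a‖Ax‖ + b‖x‖ for all x ∈ dom(A). Then A + B with domain dom(A) is self-adjoint (Rellich–Kato perturbation theorem). -/

import Mathlib

/-!
For symmetric `T` and purely imaginary `c`, `‖(T + c) x‖² = ‖T x‖² + ‖c‖² ‖x‖²`. For self-adjoint
`A` and `c ≠ 0` this makes `A + c` bounded below, hence of closed range (`A` is closed), and the
orthogonal complement of its range lies in `ker (A + c̄) = 0`, so `A + c` is onto. The Kato bound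
then gives `‖B x‖ ≤ (a + b / ‖c‖) ‖(A + c) x‖`, and once `‖c‖` is so large that `a + b / ‖c‖ < 1`,
a contraction argument shows that `A + B + c` is onto as well. Finally, a densely defined symmetric
operator `T` for which `T + c` and `T + c̄` are both onto is self-adjoint.
-/

open scoped InnerProductSpace ComplexConjugate NNReal
open Function RCLike

theorem LinearMap.surjective_add_of_norm_le {R E F : Type*} [Semiring R] [AddCommGroup E]
    [Module R E] [NormedAddCommGroup F] [Module R F] [CompleteSpace F] {S B : E →ₗ[R] F}
    (hS : Surjective S) {r : ℝ} (hr : r < 1) (hB : ∀ x, ‖B x‖ ≤ r * ‖S x‖) :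
    Surjective (S + B) := by
  intro w
  set Sinv := surjInv hS
  have hSinv (v : F) : S (Sinv v) = v := surjInv_eq hS v
  set Φ : F → F := fun v ↦ w - B (Sinv v)
  have hΦ : ContractingWith r.toNNReal Φ := by
    refine ⟨Real.toNNReal_lt_one.mpr hr, LipschitzWith.of_dist_le_mul fun v₁ v₂ ↦ ?_⟩
    calc dist (Φ v₁) (Φ v₂) = ‖B (Sinv v₂ - Sinv v₁)‖ := by
          simp only [Φ, dist_eq_norm, map_sub]; congr 1; abel
      _ ≤ r * ‖S (Sinv v₂ - Sinv v₁)‖ := hB _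
      _ ≤ r.toNNReal * dist v₁ v₂ := by
          rw [map_sub, hSinv, hSinv, dist_eq_norm', Real.coe_toNNReal']
          gcongr
          exact le_max_left _ _
  refine ⟨Sinv (hΦ.fixedPoint Φ), ?_⟩
  have hfix : Φ (hΦ.fixedPoint Φ) = hΦ.fixedPoint Φ := hΦ.fixedPoint_isFixedPt
  rw [LinearMap.add_apply, hSinv]
  nth_rewrite 1 [← hfix]
  simp [Φ]

namespace LinearPMap

section shift
variable {R E : Type*} [CommRing R] [AddCommGroup E] [Module R E]

def shift (T : E →ₗ.[R] E) (c : R) : T.domain →ₗ[R] E := T.toFun + c • T.domain.subtype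

@[simp] lemma shift_apply (T : E →ₗ.[R] E) (c : R) (x : T.domain) :
    T.shift c x = T x + c • (x : E) := rfl

end shift

variable {𝕜 E : Type*} [RCLike 𝕜] [NormedAddCommGroup E] [InnerProductSpace 𝕜 E]

lemma IsFormalAdjoint.inner_shift {S T : E →ₗ.[𝕜] E} (h : S.IsFormalAdjoint T) (c : 𝕜)
    (y : S.domain) (x : T.domain) : ⟪S.shift (conj c) y, x⟫_𝕜 = ⟪(y : E), T.shift c x⟫_𝕜 := by
  simp only [shift_apply, inner_add_left, inner_add_right, inner_smul_left, inner_smul_right,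
    conj_conj]
  rw [h y x]

variable {T : E →ₗ.[𝕜] E} {c : 𝕜}

lemma IsFormalAdjoint.norm_shift_sq (hT : T.IsFormalAdjoint T) (hc : re c = 0) (x : T.domain) :
    ‖T.shift c x‖ ^ 2 = ‖T x‖ ^ 2 + ‖c‖ ^ 2 * ‖(x : E)‖ ^ 2 := by
  have him : im ⟪T x, (x : E)⟫_𝕜 = 0 := by
    rw [← conj_eq_iff_im, inner_conj_symm, hT x x]
  have hcross : re ⟪T x, c • (x : E)⟫_𝕜 = 0 := by
    simp [inner_smul_right, hc, him]
  rw [shift_apply, norm_add_sq (𝕜 := 𝕜), hcross, norm_smul, mul_pow]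
  ring

lemma IsFormalAdjoint.norm_le_norm_shift (hT : T.IsFormalAdjoint T) (hc : re c = 0)
    (x : T.domain) : ‖T x‖ ≤ ‖T.shift c x‖ := by
  rw [← sq_le_sq₀ (norm_nonneg _) (norm_nonneg _), hT.norm_shift_sq hc]
  nlinarith [sq_nonneg ‖c‖, sq_nonneg ‖(x : E)‖]

lemma IsFormalAdjoint.norm_smul_le_norm_shift (hT : T.IsFormalAdjoint T) (hc : re c = 0)
    (x : T.domain) : ‖c‖ * ‖(x : E)‖ ≤ ‖T.shift c x‖ := by
  rw [← sq_le_sq₀ (by positivity) (norm_nonneg _), hT.norm_shift_sq hc, mul_pow]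
  nlinarith [sq_nonneg ‖T x‖]

lemma IsClosed.isClosed_range_shift [CompleteSpace E] (hT : T.IsClosed) {K : ℝ≥0}
    (hK : AntilipschitzWith K (T.shift c)) : _root_.IsClosed (Set.range (T.shift c)) := by
  -- On the complete space `graph T`, the map `(x, T x) ↦ T x + c x` is antilipschitz.
  have : CompleteSpace T.graph := hT.completeSpace_coe
  set f : T.graph →L[𝕜] E :=
    (ContinuousLinearMap.snd 𝕜 E E + c • ContinuousLinearMap.fst 𝕜 E E).comp T.graph.subtypeL
  have hf (x : T.domain) : f ⟨((x : E), T x), T.mem_graph x⟩ = T.shift c x := rfl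
  have hrange : Set.range f = Set.range (T.shift c) := by
    refine Set.Subset.antisymm ?_ fun _ ⟨x, hx⟩ ↦ ⟨_, (hf x).trans hx⟩
    rintro _ ⟨⟨⟨_, _⟩, hp⟩, rfl⟩
    obtain ⟨x, rfl, rfl⟩ := T.mem_graph_iff.mp hp
    exact ⟨x, rfl⟩
  rw [← hrange]
  refine (AddMonoidHomClass.antilipschitz_of_bound f (K := K + (1 + ‖c‖₊ * K)) ?_).isClosed_range
    f.uniformContinuous
  rintro ⟨⟨_, _⟩, hp⟩
  obtain ⟨x, rfl, rfl⟩ := T.mem_graph_iff.mp hp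
  have hx : ‖(x : E)‖ ≤ K * ‖T.shift c x‖ := by
    simpa using hK.le_mul_dist x 0
  have hTx : ‖T x‖ ≤ (1 + ‖c‖ * K) * ‖T.shift c x‖ := by
    calc ‖T x‖ = ‖T.shift c x - c • (x : E)‖ := by rw [shift_apply, add_sub_cancel_right]
      _ ≤ ‖T.shift c x‖ + ‖c‖ * ‖(x : E)‖ := by grw [norm_sub_le, norm_smul]
      _ ≤ (1 + ‖c‖ * K) * ‖T.shift c x‖ := by grw [hx]; linarith
  rw [hf]
  calc ‖(⟨((x : E), T x), T.mem_graph x⟩ : T.graph)‖ ≤ ‖(x : E)‖ + ‖T x‖ := by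
        rw [Submodule.coe_norm, Prod.norm_def]
        exact max_le_add_of_nonneg (norm_nonneg _) (norm_nonneg _)
    _ ≤ _ := by push_cast; nlinarith

lemma _root_.IsSelfAdjoint.isFormalAdjoint [CompleteSpace E] (hT : IsSelfAdjoint T) :
    T.IsFormalAdjoint T := by
  simpa only [isSelfAdjoint_def.mp hT] using adjoint_isFormalAdjoint hT.dense_domain

lemma exists_adjoint_shift_conj_eq_zero [CompleteSpace E] (hT : Dense (T.domain : Set E)) {v : E}
    (hv : v ∈ (LinearMap.range (T.shift c))ᗮ) :
    ∃ y : T†.domain, (y : E) = v ∧ T†.shift (conj c) y = 0 := by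
  have hw (x : T.domain) : ⟪conj (-c) • v, (x : E)⟫_𝕜 = ⟪v, T x⟫_𝕜 := by
    have h := Submodule.inner_right_of_mem_orthogonal (LinearMap.mem_range_self _ x) hv
    rw [← inner_conj_symm, shift_apply, inner_add_right, inner_smul_right] at h
    simp only [map_eq_zero] at h
    rw [inner_smul_left, conj_conj]
    linear_combination -h
  let y : T†.domain := ⟨v, mem_adjoint_domain_of_exists v ⟨_, hw⟩⟩
  refine ⟨y, rfl, ?_⟩
  rw [shift_apply, adjoint_apply_eq hT y hw, _root_.map_neg, neg_smul, neg_add_cancel]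

lemma _root_.IsSelfAdjoint.surjective_shift [CompleteSpace E] (hT : IsSelfAdjoint T)
    (hc : re c = 0) (hc₀ : c ≠ 0) : Surjective (T.shift c) := by
  have hsymm := hT.isFormalAdjoint
  have hc' : re (conj c) = 0 := by rwa [conj_re]
  have hclosed : _root_.IsClosed (LinearMap.range (T.shift c) : Set E) := by
    refine hT.isClosed.isClosed_range_shift (K := ‖c‖₊⁻¹) <|
      AddMonoidHomClass.antilipschitz_of_bound _ fun x ↦ ?_
    rw [NNReal.coe_inv, coe_nnnorm, inv_mul_eq_div, le_div_iff₀ (norm_pos_iff.mpr hc₀), mul_comm]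
    exact hsymm.norm_smul_le_norm_shift hc x
  have : CompleteSpace (LinearMap.range (T.shift c)) := hclosed.completeSpace_coe
  rw [← LinearMap.range_eq_top, ← Submodule.orthogonal_eq_bot_iff, Submodule.eq_bot_iff]
  intro v hv
  obtain ⟨y, rfl, hy⟩ := exists_adjoint_shift_conj_eq_zero hT.dense_domain hv
  have hle : T† ≤ T := (isSelfAdjoint_def.mp hT).le
  have hx : T.shift (conj c) ⟨y, hle.1 y.2⟩ = 0 := by rwa [shift_apply, ← hle.2 rfl]
  have hbound := hsymm.norm_smul_le_norm_shift hc' ⟨y, hle.1 y.2⟩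
  rw [hx, norm_zero, norm_conj] at hbound
  exact norm_le_zero_iff.mp <| nonpos_of_mul_nonpos_right hbound (norm_pos_iff.mpr hc₀)

lemma IsFormalAdjoint.isSelfAdjoint [CompleteSpace E] (hT : T.IsFormalAdjoint T)
    (hd : Dense (T.domain : Set E)) (h₁ : Surjective (T.shift c))
    (h₂ : Surjective (T.shift (conj c))) : IsSelfAdjoint T := by
  refine isSelfAdjoint_def.mpr (le_antisymm (le_of_eqLocus_ge fun y hy ↦ ?_) (hT.le_adjoint hd))
  obtain ⟨x, hx⟩ := h₂ (T†.shift (conj c) ⟨y, hy⟩)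
  -- `y - x` is orthogonal to the range of `T + c`, which is everything.
  have hyx : y = x := by
    obtain ⟨u, hu⟩ := h₁ (y - x)
    rw [← sub_eq_zero, ← inner_self_eq_zero (𝕜 := 𝕜)]
    nth_rewrite 2 [← hu]
    rw [inner_sub_left, ← (adjoint_isFormalAdjoint hd).inner_shift c ⟨y, hy⟩,
      ← hT.inner_shift c x, hx, sub_self]
  subst hyx
  refine ⟨hy, x.2, ?_⟩
  simpa only [shift_apply, add_left_inj] using hx.symm

lemma _root_.IsSelfAdjoint.surjective_shift_add [CompleteSpace E] (hT : IsSelfAdjoint T)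
    (B : T.domain →ₗ[𝕜] E) {a b : ℝ} (ha : 0 ≤ a) (hb : 0 ≤ b)
    (hB : ∀ x, ‖B x‖ ≤ a * ‖T x‖ + b * ‖(x : E)‖) (hc : re c = 0) (hc₀ : c ≠ 0)
    (hab : a + b / ‖c‖ < 1) : Surjective (T.shift c + B) := by
  refine LinearMap.surjective_add_of_norm_le (hT.surjective_shift hc hc₀) hab fun x ↦ ?_
  have hc' : 0 < ‖c‖ := norm_pos_iff.mpr hc₀
  have h₁ := hT.isFormalAdjoint.norm_le_norm_shift hc x
  have h₂ : ‖(x : E)‖ ≤ ‖T.shift c x‖ / ‖c‖ := by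
    rw [le_div_iff₀ hc', mul_comm]; exact hT.isFormalAdjoint.norm_smul_le_norm_shift hc x
  calc ‖B x‖ ≤ a * ‖T x‖ + b * ‖(x : E)‖ := hB x
    _ ≤ a * ‖T.shift c x‖ + b * (‖T.shift c x‖ / ‖c‖) := by gcongr
    _ = (a + b / ‖c‖) * ‖T.shift c x‖ := by ring

end LinearPMap

/-- Rellich–Kato perturbation theorem.  If `A` is self-adjoint, `B` is
symmetric on `dom A` and relatively bounded with relative bound `a < 1`, then `A + B` with
domain `dom A` is self-adjoint. -/
theorem stmt3 {H : Type*} [NormedAddCommGroup H] [InnerProductSpace ℂ H] [CompleteSpace H]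
    (A : H →ₗ.[ℂ] H) (hA : IsSelfAdjoint A)
    (B : A.domain →ₗ[ℂ] H)
    (hBsymm : ∀ x y : A.domain, ⟪B x, (y : H)⟫_ℂ = ⟪(x : H), B y⟫_ℂ)
    (a b : ℝ) (ha0 : 0 ≤ a) (ha1 : a < 1) (hb : 0 ≤ b)
    (hbound : ∀ x : A.domain, ‖B x‖ ≤ a * ‖A x‖ + b * ‖(x : H)‖) :
    IsSelfAdjoint ({ domain := A.domain, toFun := A.toFun + B } : H →ₗ.[ℂ] H) := by
  set T : H →ₗ.[ℂ] H := { domain := A.domain, toFun := A.toFun + B }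
  have hT : T.IsFormalAdjoint T := fun x y ↦ by
    change ⟪A x + B x, (y : H)⟫_ℂ = ⟪(x : H), A y + B y⟫_ℂ
    rw [inner_add_left, inner_add_right, hA.isFormalAdjoint x y, hBsymm]
  have hTshift (c : ℂ) : T.shift c = A.shift c + B := by
    ext x
    exact add_right_comm (A x) (B x) (c • (x : H))
  set μ : ℝ := (b + 1) / (1 - a)
  have hμ : 0 < μ := div_pos (by linarith) (by linarith)
  have hab : a + b / μ < 1 := by
    have h1a : 0 < 1 - a := by linarith
    rw [div_div_eq_mul_div, ← lt_sub_iff_add_lt', div_lt_iff₀ (by linarith)]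
    nlinarith
  set c : ℂ := μ * Complex.I
  have hc : re c = 0 := by simp [c]
  have hc₀ : c ≠ 0 := by simp [c, hμ.ne']
  have hnorm : ‖c‖ = μ := by simp [c, hμ.le]
  refine hT.isSelfAdjoint hA.dense_domain (c := c) ?_ ?_ <;> rw [hTshift]
  · exact hA.surjective_shift_add B ha0 hb hbound hc hc₀ (by rwa [hnorm])
  · exact hA.surjective_shift_add B ha0 hb hbound (by rwa [conj_re]) (by simpa using hc₀)
      (by rwa [norm_conj, hnorm])
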